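/- arXiv:1708.00715 — 2 statements merged into one kernel-verified Lean document; each statement's English description precedes it below -/
import Mathlib

section
/- For n ≥ 3 and x, y in the unit ball B^n with x ≠ y and z = φ_x(y) ≠ 0, one has |1/|x−y|^{n−2} − 1/[x,y]^{n−2}| = [x,z]^{n−2}(1 − |z|^{n−2}) / (|z|^{n−2}(1−|x|²)^{n−2}). -/
open Metric Classical

/-- `[x,y] = | y|x| - x/|x| |`, with the convention `[x,y] = 1` when `x = 0`. -/

noncomputable def br {n : ℕ} (x y : EuclideanSpace ℝ (Fin n)) : ℝ :=
  if x = 0 then 1 else ‖‖x‖ • y - ‖x‖⁻¹ • x‖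

/-- The Möbius transformation `φ_x(y) = (|x-y|² x - (1-|x|²)(y-x)) / [x,y]²`. -/
noncomputable def moebius {n : ℕ} (x y : EuclideanSpace ℝ (Fin n)) :
    EuclideanSpace ℝ (Fin n) :=
  ((br x y) ^ 2)⁻¹ • (‖x - y‖ ^ 2 • x - (1 - ‖x‖ ^ 2) • (y - x))

/-!
Write `c = [x,y]` and `d = |x - y|`. Expanding gives `c² = d² + (1 - |x|²)(1 - |y|²)`, so `d < c`
in the ball. From this identity one computes `|φ_x(y)| = d / c` and, since `x - φ_x(y)` is a
multiple of `y - |y|² x`, also `[x, φ_x(y)] = (1 - |x|²) / c`. Substituting both, the right-hand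
side becomes `1/d^(n-2) - 1/c^(n-2)`, which is the nonnegative quantity inside the absolute value.
-/

section
variable {n : ℕ} (x y : EuclideanSpace ℝ (Fin n))

lemma br_sq : br x y ^ 2 = ‖x - y‖ ^ 2 + (1 - ‖x‖ ^ 2) * (1 - ‖y‖ ^ 2) := by
  by_cases hx : x = 0
  · simp [br, hx]
  · have hx' : ‖x‖ ≠ 0 := norm_ne_zero_iff.mpr hx
    rw [br, if_neg hx, norm_sub_sq_real, norm_sub_sq_real, real_inner_smul_left,
      real_inner_smul_right, real_inner_comm y x, norm_smul, norm_smul]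
    simp only [norm_norm, norm_inv]
    field_simp
    ring

lemma br_nonneg : 0 ≤ br x y := by
  unfold br; split_ifs <;> positivity

lemma norm_sub_lt_br (hx : ‖x‖ < 1) (hy : ‖y‖ < 1) : ‖x - y‖ < br x y := by
  have hx2 : 0 < 1 - ‖x‖ ^ 2 := by nlinarith [norm_nonneg x]
  have hy2 : 0 < 1 - ‖y‖ ^ 2 := by nlinarith [norm_nonneg y]
  refine lt_of_pow_lt_pow_left₀ 2 (br_nonneg x y) ?_
  rw [br_sq]
  nlinarith [mul_pos hx2 hy2]

lemma norm_moebius_numerator :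
    ‖‖x - y‖ ^ 2 • x - (1 - ‖x‖ ^ 2) • (y - x)‖ = ‖x - y‖ * br x y := by
  refine (pow_left_inj₀ (norm_nonneg _) (mul_nonneg (norm_nonneg _) (br_nonneg x y))
    two_ne_zero).mp ?_
  rw [mul_pow, br_sq, norm_sub_sq_real, norm_smul, norm_smul, real_inner_smul_left,
    real_inner_smul_right, inner_sub_right, real_inner_self_eq_norm_sq, norm_sub_rev y x]
  simp only [Real.norm_eq_abs, mul_pow, sq_abs]
  linear_combination (-(1 - ‖x‖ ^ 2)) * ‖x - y‖ ^ 2 * norm_sub_sq_real x y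

/-- Holds without hypotheses: if `br x y = 0`, both sides are `0` since `0⁻¹ = 0`. -/
lemma norm_moebius : ‖moebius x y‖ = ‖x - y‖ / br x y := by
  rw [moebius, norm_smul, norm_moebius_numerator, norm_inv, norm_pow, Real.norm_eq_abs,
    abs_of_nonneg (br_nonneg x y)]
  rcases eq_or_ne (br x y) 0 with h | h
  · simp [h]
  · field_simp

lemma sub_moebius (h : br x y ≠ 0) :
    x - moebius x y = ((1 - ‖x‖ ^ 2) / br x y ^ 2) • (y - ‖y‖ ^ 2 • x) := by
  have hc := br_sq x y
  ext i
  simp only [moebius, PiLp.sub_apply, PiLp.smul_apply, smul_eq_mul]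
  field_simp
  linear_combination (x i) * hc

lemma norm_sub_norm_sq_smul_sq : ‖y - ‖y‖ ^ 2 • x‖ ^ 2 = ‖y‖ ^ 2 * br x y ^ 2 := by
  rw [br_sq, norm_sub_sq_real, norm_sub_sq_real, norm_smul, real_inner_smul_right,
    real_inner_comm]
  simp only [Real.norm_eq_abs, mul_pow, sq_abs]
  ring

lemma br_moebius (hx : ‖x‖ ≤ 1) (h : br x y ≠ 0) :
    br x (moebius x y) = (1 - ‖x‖ ^ 2) / br x y := by
  have hx2 : 0 ≤ 1 - ‖x‖ ^ 2 := by nlinarith [norm_nonneg x]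
  refine (pow_left_inj₀ (br_nonneg _ _) (div_nonneg hx2 (br_nonneg x y)) two_ne_zero).mp ?_
  have hc := br_sq x y
  rw [br_sq x (moebius x y), sub_moebius x y h, norm_smul, mul_pow,
    norm_sub_norm_sq_smul_sq, norm_moebius, Real.norm_eq_abs, sq_abs]
  field_simp
  linear_combination (1 - ‖x‖ ^ 2) * hc

end

theorem green_kernel_diff_eq_general {n : ℕ} (x y : EuclideanSpace ℝ (Fin n))
    (hx : ‖x‖ < 1) (hy : ‖y‖ < 1) (hxy : x ≠ y)
    (z : EuclideanSpace ℝ (Fin n)) (hz : z = moebius x y) :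
    |1 / ‖x - y‖ ^ (n - 2) - 1 / (br x y) ^ (n - 2)| =
      (br x z) ^ (n - 2) * (1 - ‖z‖ ^ (n - 2)) /
        (‖z‖ ^ (n - 2) * (1 - ‖x‖ ^ 2) ^ (n - 2)) := by
  have hd : 0 < ‖x - y‖ := norm_pos_iff.mpr (sub_ne_zero.mpr hxy)
  have hdc : ‖x - y‖ < br x y := norm_sub_lt_br x y hx hy
  have hc : 0 < br x y := hd.trans hdc
  have hx2 : 0 < 1 - ‖x‖ ^ 2 := by nlinarith [norm_nonneg x]
  rw [hz, norm_moebius, br_moebius x y hx.le hc.ne', abs_of_nonneg, div_pow, div_pow]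
  · field_simp
  · exact sub_nonneg.mpr
      (one_div_le_one_div_of_le (pow_pos hd _) (pow_le_pow_left₀ hd.le hdc.le _))

theorem green_kernel_diff_eq {n : ℕ} (hn : 3 ≤ n) (x y : EuclideanSpace ℝ (Fin n))
    (hx : ‖x‖ < 1) (hy : ‖y‖ < 1) (hxy : x ≠ y)
    (z : EuclideanSpace ℝ (Fin n)) (hz : z = moebius x y) (hz0 : z ≠ 0) :
    |1 / ‖x - y‖ ^ (n - 2) - 1 / (br x y) ^ (n - 2)| =
      (br x z) ^ (n - 2) * (1 - ‖z‖ ^ (n - 2)) /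
        (‖z‖ ^ (n - 2) * (1 - ‖x‖ ^ 2) ^ (n - 2)) :=
  green_kernel_diff_eq_general x y hx hy hxy z hz
end

section
/- For k ∈ {1,2,…}, define f_k : B^n → R^n (n ≥ 3) by f_k(x) = (k x₁, x₂/k, x₃, …, x_{n−1}, |x|²/3 + x_n). Then each f_k satisfies Δf_k = (0, …, 0, 2n/3), f_k(0) = 0, J_{f_k}(0) = 1, f_k is injective on B^n, and the image f_k(B^n) contains no ball of radius greater than 1/k. -/
/-!
Write `D = diag(k, 1/k, 1, …, 1)` and `u = e_n`. Since `D u = u`, the map is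
`f x = D (x + ‖x‖²/3 • u)`: a linear map plus a multiple of `‖x‖²`, whose second derivatives
are constant, so `Δf = (2n/3) u`, and `Df(0) = D` has determinant `k · k⁻¹ = 1`.
The bump `x ↦ x + c‖x‖² u` with `|c| ≤ 1/2` is injective on the unit ball (pair the difference
of two equal images with `x + y`), hence so is `f`. Finally `f(x)₂ = x₂ / k`, so the image lies
in the slab `|y₂| < 1/k`, which contains no ball of radius greater than `1/k`.
-/

open Metric

/-- The (componentwise) Laplacian of `f`, as the sum of the second derivatives in the
coordinate directions. -/
noncomputable def lap {n : ℕ} {F : Type*} [NormedAddCommGroup F] [NormedSpace ℝ F]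
    (f : EuclideanSpace ℝ (Fin n) → F) (x : EuclideanSpace ℝ (Fin n)) : F :=
  ∑ i : Fin n, fderiv ℝ (fun y => fderiv ℝ f y (EuclideanSpace.single i 1)) x
    (EuclideanSpace.single i 1)

open RealInnerProductSpace Matrix

section NormSqBump

variable {E F : Type*} [NormedAddCommGroup E] [InnerProductSpace ℝ E]
  [NormedAddCommGroup F] [NormedSpace ℝ F]

theorem hasFDerivAt_linear_add_normSq_smul (L : E →L[ℝ] F) (c : ℝ) (u : F) (y : E) :
    HasFDerivAt (fun x => L x + (c * ‖x‖ ^ 2) • u)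
      (L + (c • (2 • innerSL ℝ y)).smulRight u) y :=
  L.hasFDerivAt.add (((hasStrictFDerivAt_norm_sq y).hasFDerivAt.const_mul c).smul_const u)

theorem fderiv_linear_add_normSq_smul_apply (L : E →L[ℝ] F) (c : ℝ) (u : F) (y v : E) :
    fderiv ℝ (fun x => L x + (c * ‖x‖ ^ 2) • u) y v = L v + (2 * c * ⟪v, y⟫) • u := by
  rw [(hasFDerivAt_linear_add_normSq_smul L c u y).fderiv]
  simp [real_inner_comm y v, mul_left_comm c, mul_assoc]

theorem fderiv_linear_add_normSq_smul_zero (L : E →L[ℝ] F) (c : ℝ) (u : F) :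
    fderiv ℝ (fun x => L x + (c * ‖x‖ ^ 2) • u) 0 = L := by
  ext v
  simp [fderiv_linear_add_normSq_smul_apply]

theorem fderiv_fderiv_linear_add_normSq_smul_apply (L : E →L[ℝ] F) (c : ℝ) (u : F)
    (x v w : E) :
    fderiv ℝ (fun y => fderiv ℝ (fun x => L x + (c * ‖x‖ ^ 2) • u) y v) x w
      = (2 * c * ⟪v, w⟫) • u := by
  simp_rw [fderiv_linear_add_normSq_smul_apply]
  have hderiv : HasFDerivAt (fun y => L v + (2 * c * ⟪v, y⟫) • u)
      (((2 * c) • innerSL ℝ v).smulRight u) x :=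
    (((innerSL ℝ v).hasFDerivAt.const_mul (2 * c)).smul_const u).const_add (L v)
  simp [hderiv.fderiv]

theorem injOn_add_normSq_smul_ball {u : E} (hu : ‖u‖ ≤ 1) {c : ℝ} (hc : |c| ≤ 1 / 2) :
    Set.InjOn (fun x => x + (c * ‖x‖ ^ 2) • u) (ball 0 1) := by
  intro x hx y hy hxy
  rw [mem_ball_zero_iff] at hx hy
  have hsub : x - y = (c * (‖y‖ ^ 2 - ‖x‖ ^ 2)) • u := by
    linear_combination (norm := module) (hxy : x + (c * ‖x‖ ^ 2) • u = y + (c * ‖y‖ ^ 2) • u)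
  have hpair : (‖x‖ ^ 2 - ‖y‖ ^ 2) * (1 + c * ⟪u, x + y⟫) = 0 := by
    have h := congrArg (⟪·, x + y⟫) hsub
    simp only [real_inner_smul_left, inner_sub_left, inner_add_right, real_inner_self_eq_norm_sq,
      real_inner_comm x y] at h
    rw [inner_add_right]
    linear_combination h
  have hsmall : |c * ⟪u, x + y⟫| < 1 :=
    calc |c * ⟪u, x + y⟫| ≤ 1 / 2 * (‖u‖ * ‖x + y‖) := by
          rw [abs_mul]
          exact mul_le_mul hc (abs_real_inner_le_norm u (x + y)) (abs_nonneg _) (by norm_num)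
      _ ≤ 1 / 2 * (1 * (‖x‖ + ‖y‖)) := by gcongr; exact norm_add_le x y
      _ < 1 := by linarith
  have hnorm : ‖x‖ ^ 2 = ‖y‖ ^ 2 := by
    rcases mul_eq_zero.1 hpair with h | h
    · linarith
    · linarith [(abs_lt.1 hsmall).1]
  simpa [hnorm, sub_eq_zero] using hsub

theorem injOn_linear_add_normSq_smul_ball {L : E →L[ℝ] F} (hL : Function.Injective L) {u : E}
    (hu : ‖u‖ ≤ 1) {c : ℝ} (hc : |c| ≤ 1 / 2) :
    Set.InjOn (fun x => L x + (c * ‖x‖ ^ 2) • L u) (ball 0 1) := by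
  simp_rw [← L.map_smul, ← L.map_add]
  exact hL.comp_injOn (injOn_add_normSq_smul_ball hu hc)

end NormSqBump

theorem lap_linear_add_normSq_smul {n : ℕ} {F : Type*} [NormedAddCommGroup F] [NormedSpace ℝ F]
    (L : EuclideanSpace ℝ (Fin n) →L[ℝ] F) (c : ℝ) (u : F) (x : EuclideanSpace ℝ (Fin n)) :
    lap (fun x => L x + (c * ‖x‖ ^ 2) • u) x = (2 * c * n) • u := by
  simp [lap, fderiv_fderiv_linear_add_normSq_smul_apply, ← Nat.cast_smul_eq_nsmul ℝ, smul_smul,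
    mul_comm]

section Coordinates

variable {ι : Type*} [Fintype ι] [DecidableEq ι]

theorem not_ball_subset_setOf_abs_apply_lt (i : ι) {a r : ℝ} (ha : 0 ≤ a) (hr : a < r)
    (c : EuclideanSpace ℝ ι) : ¬ ball c r ⊆ {y | |y i| < a} := by
  intro hsub
  obtain ⟨t, hat, htr⟩ := exists_between hr
  have hmem : ∀ s : ℝ, |s| = t → c + s • EuclideanSpace.single i 1 ∈ ball c r := by
    intro s hs
    rw [mem_ball, dist_eq_norm, add_sub_cancel_left, norm_smul, PiLp.norm_single, norm_one,
      mul_one, Real.norm_eq_abs, hs]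
    exact htr
  have ht : |t| = t := abs_of_nonneg (by linarith)
  have hplus := hsub (hmem t ht)
  have hminus := hsub (hmem (-t) (by rw [abs_neg, ht]))
  simp only [Set.mem_ofPred_eq, PiLp.add_apply, PiLp.smul_apply, PiLp.single_apply,
    if_true, smul_eq_mul, mul_one] at hplus hminus
  linarith [(abs_lt.1 hplus).2, (abs_lt.1 hminus).1]

theorem toEuclideanCLM_diagonal_apply (d : ι → ℝ) (x : EuclideanSpace ℝ ι) (i : ι) :
    toEuclideanCLM (n := ι) (𝕜 := ℝ) (diagonal d) x i = d i * x i := by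
  simp [mulVec_diagonal]

theorem toEuclideanCLM_diagonal_single (d : ι → ℝ) (i : ι) (a : ℝ) :
    toEuclideanCLM (n := ι) (𝕜 := ℝ) (diagonal d) (EuclideanSpace.single i a)
      = EuclideanSpace.single i (d i * a) := by
  ext j
  by_cases hj : j = i <;> simp [toEuclideanCLM_diagonal_apply, hj]

theorem det_toEuclideanCLM_diagonal (d : ι → ℝ) :
    LinearMap.det (toEuclideanCLM (n := ι) (𝕜 := ℝ) (diagonal d) :
      EuclideanSpace ℝ ι →ₗ[ℝ] EuclideanSpace ℝ ι) = ∏ i, d i := by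
  rw [coe_toEuclideanCLM_eq_toEuclideanLin, toEuclideanLin_eq_toLin_orthonormal,
    LinearMap.det_toLin, det_diagonal]

noncomputable def stretchWeights (i₀ i₁ : ι) (k : ℝ) : ι → ℝ :=
  fun i => if i = i₀ then k else if i = i₁ then k⁻¹ else 1

theorem prod_stretchWeights {i₀ i₁ : ι} (h : i₀ ≠ i₁) {k : ℝ} (hk : k ≠ 0) :
    ∏ i, stretchWeights i₀ i₁ k i = 1 := by
  rw [← Finset.prod_mul_prod_compl {i₀, i₁}, Finset.prod_pair h, Finset.prod_eq_one]
  · simp [stretchWeights, h.symm, hk]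
  · intro i hi
    simp_all [stretchWeights]

theorem equiv_symm_stretch_eq_diagonal_add_normSq_smul {i₀ i₁ m : ι} (h0m : i₀ ≠ m) (h1m : i₁ ≠ m)
    (k : ℝ) (x : EuclideanSpace ℝ ι) :
    ((WithLp.equiv 2 (ι → ℝ)).symm fun i =>
      if i = i₀ then k * x i₀
      else if i = i₁ then x i₁ / k
      else if i = m then ‖x‖ ^ 2 / 3 + x m
      else x i) =
    toEuclideanCLM (n := ι) (𝕜 := ℝ) (diagonal (stretchWeights i₀ i₁ k)) x
      + ((3 : ℝ)⁻¹ * ‖x‖ ^ 2) • EuclideanSpace.single m 1 := by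
  ext i
  simp only [WithLp.equiv_symm_apply, PiLp.toLp_apply, PiLp.add_apply, PiLp.smul_apply,
    toEuclideanCLM_diagonal_apply, PiLp.single_apply, stretchWeights, smul_eq_mul]
  split_ifs <;> simp_all <;> ring

end Coordinates

theorem no_landau_theorem_counterexample (n : ℕ) (hn : 3 ≤ n) (k : ℕ) (hk : 1 ≤ k)
    (f : EuclideanSpace ℝ (Fin n) → EuclideanSpace ℝ (Fin n))
    (hf : f = fun x => (WithLp.equiv 2 (Fin n → ℝ)).symm fun i =>
      if i = (⟨0, by omega⟩ : Fin n) then (k : ℝ) * x ⟨0, by omega⟩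
      else if i = (⟨1, by omega⟩ : Fin n) then x ⟨1, by omega⟩ / k
      else if i = (⟨n - 1, by omega⟩ : Fin n) then ‖x‖ ^ 2 / 3 + x ⟨n - 1, by omega⟩
      else x i) :
    (∀ x ∈ ball (0 : EuclideanSpace ℝ (Fin n)) 1,
      lap f x = EuclideanSpace.single (⟨n - 1, by omega⟩ : Fin n) (2 * (n : ℝ) / 3)) ∧
    f 0 = 0 ∧
    LinearMap.det (fderiv ℝ f 0 :
      EuclideanSpace ℝ (Fin n) →ₗ[ℝ] EuclideanSpace ℝ (Fin n)) = 1 ∧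
    Set.InjOn f (ball 0 1) ∧
    (∀ (c : EuclideanSpace ℝ (Fin n)) (r : ℝ), 1 / (k : ℝ) < r →
      ¬ ball c r ⊆ f '' ball 0 1) := by
  set i₀ : Fin n := ⟨0, by omega⟩
  set i₁ : Fin n := ⟨1, by omega⟩
  set m : Fin n := ⟨n - 1, by omega⟩
  have h01 : i₀ ≠ i₁ := by simp [i₀, i₁, Fin.ext_iff]
  have h0m : i₀ ≠ m := by simp [i₀, m, Fin.ext_iff]; omega
  have h1m : i₁ ≠ m := by simp [i₁, m, Fin.ext_iff]; omega
  have hk0 : (k : ℝ) ≠ 0 := by positivity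
  set D := toEuclideanCLM (n := Fin n) (𝕜 := ℝ) (diagonal (stretchWeights i₀ i₁ k))
  set u : EuclideanSpace ℝ (Fin n) := EuclideanSpace.single m 1
  have hfD : f = fun x => D x + ((3 : ℝ)⁻¹ * ‖x‖ ^ 2) • u :=
    hf.trans (funext (equiv_symm_stretch_eq_diagonal_add_normSq_smul h0m h1m k))
  have hdet : LinearMap.det (D : EuclideanSpace ℝ (Fin n) →ₗ[ℝ] _) = 1 := by
    rw [det_toEuclideanCLM_diagonal, prod_stretchWeights h01 hk0]
  refine ⟨fun x _ => ?_, by simp [hfD], ?_, ?_, fun c r hr hsub => ?_⟩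
  · rw [hfD, lap_linear_add_normSq_smul]
    ext j
    by_cases hj : j = m <;> simp [u, hj]
    ring
  · rw [hfD, fderiv_linear_add_normSq_smul_zero, hdet]
  · have hDu : D u = u := by
      simp [D, u, toEuclideanCLM_diagonal_single, stretchWeights, h0m.symm, h1m.symm]
    have hD : Function.Injective D :=
      ((Module.End.isUnit_iff _).1 ((LinearMap.isUnit_iff_isUnit_det _).2 (by simp [hdet]))).1
    rw [hfD, ← hDu]
    exact injOn_linear_add_normSq_smul_ball hD (by simp [u]) (by norm_num [abs_of_pos])
  · have himage : f '' ball 0 1 ⊆ {y | |y i₁| < 1 / k} := by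
      rintro _ ⟨x, hx, rfl⟩
      have hx₁ : |x i₁| < 1 := (PiLp.norm_apply_le x i₁).trans_lt (mem_ball_zero_iff.1 hx)
      simp only [Set.mem_ofPred_eq, hf, WithLp.equiv_symm_apply, if_neg h01.symm,
        if_true, abs_div, Nat.abs_cast]
      gcongr
    exact not_ball_subset_setOf_abs_apply_lt i₁ (by positivity) hr c (hsub.trans himage)
end
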